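/- Equivariance of the right twist: for every invertible k×k complex matrix α and every invertible diagonal n×n complex matrix β, the right twist satisfies τ→(α·A·β) = (α⁻¹)ᵀ · τ→(A) · β⁻¹. -/

import Mathlib

open scoped BigOperators

/-- The columns of `A` are `n`-periodic. -/
def ColPeriodic (k n : ℕ) (A : ℤ → Fin k → ℂ) : Prop :=
  ∀ a : ℤ, A (a + (n : ℤ)) = A a

/-- `A` has rank `k`, i.e. its columns span `ℂ^k`. -/
def FullRank (k : ℕ) (A : ℤ → Fin k → ℂ) : Prop :=
  Submodule.span ℂ (Set.range A) = ⊤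

/-- The Gale (componentwise) partial order on finite subsets of `ℤ` of equal
cardinality: `B ≼ C` iff they have the same cardinality and, for each `i`, the
`i`-th smallest element of `B` is at most the `i`-th smallest element of `C`
(equivalently, the counting condition below). -/
def galeLE (B C : Finset ℤ) : Prop :=
  B.card = C.card ∧
    ∀ t : ℤ, (B.filter fun x => t ≤ x).card ≤ (C.filter fun x => t ≤ x).card

/-- The columns of `A` indexed by `J` form a basis of `ℂ^k`. -/
def IsColBasis (k : ℕ) (A : ℤ → Fin k → ℂ) (J : Finset ℤ) : Prop :=
  J.card = k ∧ LinearIndependent ℂ (fun j : (J : Set ℤ) => A (j : ℤ)) ∧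
    Submodule.span ℂ (A '' (J : Set ℤ)) = ⊤

/-- `I` is the `≼_a`-minimal `k`-element subset of `{a, a+1, …, a+n-1}` whose
columns form a basis of `ℂ^k` (the `a`-minimal basis `I→_a`). -/
def IsMinBasis (k n : ℕ) (A : ℤ → Fin k → ℂ) (a : ℤ) (I : Finset ℤ) : Prop :=
  I ⊆ Finset.Ico a (a + (n : ℤ)) ∧ IsColBasis k A I ∧
    ∀ J : Finset ℤ, J ⊆ Finset.Ico a (a + (n : ℤ)) → IsColBasis k A J → galeLE I J

/-- `I` is the `≼_{a+1}`-maximal `k`-element subset of `{a-n+1, …, a}` whose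
columns form a basis of `ℂ^k` (the `a`-maximal basis `I←_a`).  Note that on
representatives in `{a-n+1, …, a}` the cyclic order `≺_{a+1}` agrees with the
usual order of `ℤ`. -/
def IsMaxBasis (k n : ℕ) (A : ℤ → Fin k → ℂ) (a : ℤ) (I : Finset ℤ) : Prop :=
  I ⊆ Finset.Ioc (a - (n : ℤ)) a ∧ IsColBasis k A I ∧
    ∀ J : Finset ℤ, J ⊆ Finset.Ioc (a - (n : ℤ)) a → IsColBasis k A J → galeLE J I

/-- The standard symmetric bilinear form `⟨x|y⟩ = ∑ i, x i * y i` on `ℂ^k`. -/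
noncomputable def bil (k : ℕ) (x y : Fin k → ℂ) : ℂ := ∑ i, x i * y i

/-- `π` is the bounded affine permutation of `A`:
`π a` is the least `r` with `a ≤ r ≤ a + n` and `A a ∈ span(A (a+1), …, A r)`. -/
def IsBAP (k n : ℕ) (A : ℤ → Fin k → ℂ) (π : ℤ → ℤ) : Prop :=
  ∀ a : ℤ,
    a ≤ π a ∧ π a ≤ a + (n : ℤ) ∧
    A a ∈ Submodule.span ℂ (A '' Set.Ioc a (π a)) ∧
    ∀ r : ℤ, a ≤ r → r ≤ a + (n : ℤ) →
      A a ∈ Submodule.span ℂ (A '' Set.Ioc a r) → π a ≤ r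

/-- `T` is the right twist `τ→(A)`: for each `a`, the column `T a` pairs to `1`
with `A a` and to `0` with the other columns of the `a`-minimal basis. -/
def IsRightTwist (k n : ℕ) (A T : ℤ → Fin k → ℂ) : Prop :=
  ∀ (a : ℤ) (I : Finset ℤ), IsMinBasis k n A a I →
    ∀ b ∈ I, bil k (T a) (A b) = if b = a then 1 else 0

/-- `T` is the left twist `τ←(A)`: for each `a`, the column `T a` pairs to `1`
with `A a` and to `0` with the other columns of the `a`-maximal basis. -/
def IsLeftTwist (k n : ℕ) (A T : ℤ → Fin k → ℂ) : Prop :=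
  ∀ (a : ℤ) (I : Finset ℤ), IsMaxBasis k n A a I →
    ∀ b ∈ I, bil k (T a) (A b) = if b = a then 1 else 0

/-- `Δ_I(A)`, where `I = {i 0 < i 1 < ⋯ < i (k-1)}` is given by a strictly
monotone enumeration `i : Fin k → ℤ`: the determinant of the `k×k` matrix with
columns `A (i 0), …, A (i (k-1))`. -/
noncomputable def Delta (k : ℕ) (A : ℤ → Fin k → ℂ) (i : Fin k → ℤ) : ℂ :=
  Matrix.det (Matrix.of fun r s : Fin k => A (i s) r)

/-!
The twist conditions only see an `a`-minimal basis, and one always exists: scanning the window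
`[a, a + n)` from left to right and keeping each column that is not in the span of the earlier
ones gives a Gale-minimal basis, because for every `t` the columns of any independent set lying
before `t` are in the span of the greedy columns before `t`. Rescaling columns by nonzero scalars
and applying an invertible `α` preserves which column sets are bases, so `α·A·β` has the same
`a`-minimal basis `I`. The vector `(d a)⁻¹ (α⁻¹)ᵀ (T a)` pairs with the columns `d b • α (A b)`,
`b ∈ I`, exactly as `T' a` must; these columns span `ℂ^k` and `⟨·|·⟩` is nondegenerate.
-/

open Submodule Module Matrix

theorem Function.Periodic.image_Ico {α β : Type*} [AddCommGroup α] [LinearOrder α]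
    [IsOrderedAddMonoid α] [Archimedean α] {f : α → β} {c : α} (h : Function.Periodic f c)
    (hc : 0 < c) (a : α) : f '' Set.Ico a (a + c) = Set.range f :=
  (Set.image_subset_range _ _).antisymm <| Set.range_subset_iff.2 fun x =>
    let ⟨y, hy, hyx⟩ := h.exists_mem_Ico hc x a
    ⟨y, hy, hyx.symm⟩

theorem LinearIndepOn.card_le_card_of_image_subset_span {K V ι : Type*} [Field K]
    [AddCommGroup V] [Module K V] {f : ι → V} {s t : Finset ι} (hs : LinearIndepOn K f s)
    (hst : f '' s ⊆ span K (f '' t)) : s.card ≤ t.card := by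
  classical
  have := FiniteDimensional.span_of_finite K (t.finite_toSet.image f)
  calc s.card = finrank K (span K (f '' s)) := by
        rw [Set.image_eq_range, finrank_span_eq_card hs]; simp
    _ ≤ finrank K (span K (f '' t)) := Submodule.finrank_mono (span_le.2 hst)
    _ ≤ (t.image f).card := by rw [← Finset.coe_image]; exact finrank_span_finset_le_card _
    _ ≤ t.card := Finset.card_image_le

theorem span_image_smul_eq {K V ι : Type*} [Field K] [AddCommGroup V] [Module K V]
    {c : ι → K} (hc : ∀ i, c i ≠ 0) (g : ι → V) (s : Set ι) :
    span K ((fun i => c i • g i) '' s) = span K (g '' s) := by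
  refine le_antisymm (span_le.2 ?_) (span_le.2 ?_) <;> rintro _ ⟨i, hi, rfl⟩
  · exact smul_mem _ _ (subset_span ⟨i, hi, rfl⟩)
  · have hci : c i • g i ∈ span K ((fun i => c i • g i) '' s) := subset_span ⟨i, hi, rfl⟩
    have := smul_mem _ (c i)⁻¹ hci
    rwa [smul_smul, inv_mul_cancel₀ (hc i), one_smul] at this

section Greedy

variable (K : Type*) {V : Type*} [Field K] [AddCommGroup V] [Module K V] (f : ℤ → V) (a b : ℤ)

open Classical in
noncomputable def greedyBasis : Finset ℤ :=
  (Finset.Ico a b).filter fun x => f x ∉ span K (f '' Set.Ico a x)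

variable {K f a b}

theorem mem_greedyBasis {x : ℤ} :
    x ∈ greedyBasis K f a b ↔ x ∈ Set.Ico a b ∧ f x ∉ span K (f '' Set.Ico a x) := by
  simp [greedyBasis]

theorem greedyBasis_subset : (greedyBasis K f a b : Set ℤ) ⊆ Set.Ico a b :=
  fun _ hx => (mem_greedyBasis.1 hx).1

theorem mem_span_greedyBasis {x : ℤ} (hx : x ∈ Set.Ico a b) :
    f x ∈ span K (f '' ((greedyBasis K f a b).filter (· ≤ x))) := by
  induction x using Int.strongRec (m := a) with
  | lt x hxa => exact absurd hx.1 (not_le.2 hxa)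
  | ge x _ ih =>
    by_cases hxG : x ∈ greedyBasis K f a b
    · exact subset_span ⟨x, by simp [hxG], rfl⟩
    have hdep : f x ∈ span K (f '' Set.Ico a x) := by
      by_contra h
      exact hxG (mem_greedyBasis.2 ⟨hx, h⟩)
    refine span_le.2 ?_ hdep
    rintro _ ⟨y, hy, rfl⟩
    refine span_mono (Set.image_mono fun z hz => ?_) (ih y hy.2 ⟨hy.1, hy.2.trans hx.2⟩)
    obtain ⟨hzG, hzy⟩ := Finset.mem_filter.1 hz
    exact Finset.mem_filter.2 ⟨hzG, hzy.trans hy.2.le⟩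

theorem linearIndepOn_greedyBasis : LinearIndepOn K f (greedyBasis K f a b) := by
  suffices ∀ s ⊆ greedyBasis K f a b, LinearIndepOn K f s from this _ subset_rfl
  intro s
  induction s using Finset.induction_on_max with
  | empty => simp
  | insert x s hlt ih =>
    intro hs
    rw [Finset.coe_insert, linearIndepOn_insert fun hx => lt_irrefl x (hlt x hx)]
    refine ⟨ih ((Finset.subset_insert _ _).trans hs), fun hmem => ?_⟩
    have hx := mem_greedyBasis.1 (hs (Finset.mem_insert_self x s))
    refine hx.2 (span_mono (Set.image_mono fun y hy => ?_) hmem)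
    exact ⟨(greedyBasis_subset (hs (Finset.mem_insert_of_mem hy))).1, hlt y hy⟩

theorem span_greedyBasis : span K (f '' greedyBasis K f a b) = span K (f '' Set.Ico a b) := by
  refine le_antisymm (span_mono (Set.image_mono greedyBasis_subset)) (span_le.2 ?_)
  rintro _ ⟨x, hx, rfl⟩
  exact span_mono (Set.image_mono (Finset.coe_subset.2 (Finset.filter_subset _ _)))
    (mem_span_greedyBasis hx)

theorem card_filter_lt_le_greedyBasis {J : Finset ℤ} (hJ : (J : Set ℤ) ⊆ Set.Ico a b)
    (hJi : LinearIndepOn K f J) (t : ℤ) :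
    (J.filter (· < t)).card ≤ ((greedyBasis K f a b).filter (· < t)).card := by
  have hsub : (J.filter (· < t) : Set ℤ) ⊆ J := Finset.coe_subset.2 (Finset.filter_subset _ _)
  refine (hJi.mono hsub).card_le_card_of_image_subset_span ?_
  rintro _ ⟨j, hj, rfl⟩
  obtain ⟨hjJ, hjt⟩ := Finset.mem_filter.1 hj
  refine span_mono (Set.image_mono fun y hy => ?_) (mem_span_greedyBasis (hJ hjJ))
  obtain ⟨hyG, hyj⟩ := Finset.mem_filter.1 hy
  exact Finset.mem_filter.2 ⟨hyG, hyj.trans_lt hjt⟩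

end Greedy

theorem galeLE_of_card_filter_lt_le {B C : Finset ℤ} (hcard : B.card = C.card)
    (h : ∀ t, (C.filter (· < t)).card ≤ (B.filter (· < t)).card) : galeLE B C := by
  refine ⟨hcard, fun t => ?_⟩
  have hB := B.card_filter_add_card_filter_not (t ≤ ·)
  have hC := C.card_filter_add_card_filter_not (t ≤ ·)
  simp only [not_le] at hB hC
  have := h t
  omega

section ColumnBases

variable {k n : ℕ} {A : ℤ → Fin k → ℂ}

theorem isColBasis_of_linearIndepOn {J : Finset ℤ} (hJ : LinearIndepOn ℂ A J)
    (hspan : span ℂ (A '' J) = ⊤) : IsColBasis k A J := by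
  refine ⟨?_, hJ, hspan⟩
  have := finrank_span_eq_card hJ
  rw [← Set.image_eq_range, hspan, finrank_top, finrank_fin_fun] at this
  simpa using this.symm

theorem greedyBasis_isMinBasis {a : ℤ} (hwin : span ℂ (A '' Set.Ico a (a + n)) = ⊤) :
    IsMinBasis k n A a (greedyBasis ℂ A a (a + n)) := by
  have hbasis : IsColBasis k A (greedyBasis ℂ A a (a + n)) :=
    isColBasis_of_linearIndepOn linearIndepOn_greedyBasis (span_greedyBasis.trans hwin)
  refine ⟨fun x hx => by simpa using greedyBasis_subset hx, hbasis, fun J hJ hJb => ?_⟩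
  exact galeLE_of_card_filter_lt_le (hbasis.1.trans hJb.1.symm)
    (card_filter_lt_le_greedyBasis (fun x hx => Finset.mem_Ico.1 (hJ hx)) hJb.2.1)

theorem exists_isMinBasis (hn : 0 < n) (hper : ColPeriodic k n A) (hrank : FullRank k A)
    (a : ℤ) : ∃ I, IsMinBasis k n A a I := by
  refine ⟨_, greedyBasis_isMinBasis ?_⟩
  rw [Function.Periodic.image_Ico hper (by exact_mod_cast hn)]
  exact hrank

theorem isColBasis_smul_iff {d : ℤ → ℂ} (hd : ∀ j, d j ≠ 0) {J : Finset ℤ} :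
    IsColBasis k (fun j => d j • A j) J ↔ IsColBasis k A J := by
  have hindep : LinearIndepOn ℂ (fun j => d j • A j) J ↔ LinearIndepOn ℂ A J :=
    LinearIndependent.units_smul_iff (fun j : (J : Set ℤ) => A j) fun j => Units.mk0 (d j) (hd j)
  simp only [IsColBasis, span_image_smul_eq hd]
  exact and_congr_right' (and_congr_left' hindep)

theorem isColBasis_linearEquiv_iff (e : (Fin k → ℂ) ≃ₗ[ℂ] (Fin k → ℂ)) {J : Finset ℤ} :
    IsColBasis k (fun j => e (A j)) J ↔ IsColBasis k A J := by
  have hindep : LinearIndepOn ℂ (fun j => e (A j)) J ↔ LinearIndepOn ℂ A J :=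
    (e : (Fin k → ℂ) →ₗ[ℂ] (Fin k → ℂ)).linearIndependent_iff e.ker
  have hspan : span ℂ ((fun j => e (A j)) '' J) = ⊤ ↔ span ℂ (A '' J) = ⊤ := by
    rw [← Set.image_image, ← LinearEquiv.coe_coe, span_image, Submodule.map_eq_top_iff]
  simp only [IsColBasis]
  exact and_congr_right' (and_congr hindep hspan)

theorem isMinBasis_smul_mulVec_iff {α : Matrix (Fin k) (Fin k) ℂ} (hα : IsUnit α.det)
    {d : ℤ → ℂ} (hd : ∀ j, d j ≠ 0) {a : ℤ} {I : Finset ℤ} :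
    IsMinBasis k n (fun j => d j • α *ᵥ A j) a I ↔ IsMinBasis k n A a I := by
  have hcol (J : Finset ℤ) : IsColBasis k (fun j => d j • α *ᵥ A j) J ↔ IsColBasis k A J :=
    (isColBasis_smul_iff hd).trans
      (isColBasis_linearEquiv_iff (α.toLinearEquiv' (α.invertibleOfIsUnitDet hα)))
  simp only [IsMinBasis, hcol]

end ColumnBases

section Pairing

variable {k : ℕ}

theorem bil_smul_smul (c c' : ℂ) (u v : Fin k → ℂ) :
    bil k (c • u) (c' • v) = c * c' * bil k u v := by
  rw [bil, bil, Finset.mul_sum]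
  exact Finset.sum_congr rfl fun i _ => by simp only [Pi.smul_apply, smul_eq_mul]; ring

theorem bil_inv_transpose_mulVec_mulVec {α : Matrix (Fin k) (Fin k) ℂ} (hα : IsUnit α.det)
    (u v : Fin k → ℂ) : bil k ((α⁻¹)ᵀ *ᵥ u) (α *ᵥ v) = bil k u v := by
  change (α⁻¹)ᵀ *ᵥ u ⬝ᵥ α *ᵥ v = u ⬝ᵥ v
  rw [mulVec_transpose, dotProduct_mulVec, vecMul_vecMul, nonsing_inv_mul _ hα, vecMul_one]

theorem eq_of_forall_bil_eq {s : Set (Fin k → ℂ)} (hs : span ℂ s = ⊤) {u v : Fin k → ℂ}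
    (h : ∀ y ∈ s, bil k u y = bil k v y) : u = v :=
  (dotProductEquiv ℂ (Fin k)).injective (LinearMap.ext_on hs h)

end Pairing

theorem twist_equivariance_general
    (k n : ℕ) (hk : 1 ≤ k) (hkn : k ≤ n)
    (A : ℤ → Fin k → ℂ) (hper : ColPeriodic k n A) (hrank : FullRank k A)
    (α : Matrix (Fin k) (Fin k) ℂ) (hα : IsUnit α.det)
    (d : ℤ → ℂ) (hd : ∀ a : ℤ, d a ≠ 0)
    (T T' : ℤ → Fin k → ℂ)
    (hT : IsRightTwist k n A T)
    (hT' : IsRightTwist k n (fun a => d a • α.mulVec (A a)) T') :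
    ∀ a : ℤ, T' a = (d a)⁻¹ • (α⁻¹).transpose.mulVec (T a) := by
  intro a
  obtain ⟨I, hI⟩ := exists_isMinBasis (Nat.lt_of_lt_of_le hk hkn) hper hrank a
  have hI' := (isMinBasis_smul_mulVec_iff hα hd).2 hI
  refine eq_of_forall_bil_eq hI'.2.1.2.2 ?_
  rintro _ ⟨b, hb, rfl⟩
  rw [hT' a I hI' b hb, bil_smul_smul, bil_inv_transpose_mulVec_mulVec hα, hT a I hI b hb]
  split_ifs with hba
  · rw [hba, inv_mul_cancel₀ (hd a), one_mul]
  · rw [mul_zero]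

/-- equivariance of the right twist: for every invertible
`k×k` matrix `α` and every invertible diagonal `n×n` matrix `β` (encoded by
its periodic diagonal entries `d`, so that the columns of `α·A·β` are
`d a • α.mulVec (A a)`), the right twist satisfies
`τ→(α·A·β) = (α⁻¹)ᵀ · τ→(A) · β⁻¹`, i.e. its `a`-th column is
`(d a)⁻¹ • (α⁻¹)ᵀ.mulVec (τ→(A) a)`. -/
theorem twist_equivariance
    (k n : ℕ) (hk : 1 ≤ k) (hkn : k ≤ n)
    (A : ℤ → Fin k → ℂ) (hper : ColPeriodic k n A) (hrank : FullRank k A)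
    (α : Matrix (Fin k) (Fin k) ℂ) (hα : IsUnit α.det)
    (d : ℤ → ℂ) (hd : ∀ a : ℤ, d a ≠ 0) (hdper : ∀ a : ℤ, d (a + (n : ℤ)) = d a)
    (T T' : ℤ → Fin k → ℂ)
    (hT : IsRightTwist k n A T)
    (hT' : IsRightTwist k n (fun a => d a • α.mulVec (A a)) T') :
    ∀ a : ℤ, T' a = (d a)⁻¹ • (α⁻¹).transpose.mulVec (T a) :=
  twist_equivariance_general k n hk hkn A hper hrank α hα d hd T T' hT hT'
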